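/- arXiv:1707.06485 — 2 statements merged into one kernel-verified Lean document; each statement's English description precedes it below -/
import Mathlib

section
/- If X = UDVᵀ is the singular value decomposition of X and X = AB is any factorization, then tr(D) = tr(UᵀABV), and consequently ‖X‖_* ≤ ‖UᵀA‖_F‖BV‖_F. -/
/-!
Orthonormality of the columns of `U` and `V` gives `Uᵀ A B V = Uᵀ X V = D`. Since `V D Vᵀ` is
positive semidefinite and squares to `Xᵀ X`, it is the square root of `Xᵀ X`, so `‖X‖_* = tr D`.
Finally `tr ((Uᵀ A) (B V))` is an entrywise inner product, bounded by Cauchy–Schwarz.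
-/

open Matrix BigOperators

/-- Frobenius norm of a real matrix. -/
noncomputable def frobNorm {m n : Type*} [Fintype m] [Fintype n]
    (X : Matrix m n ℝ) : ℝ :=
  Real.sqrt (∑ i, ∑ j, (X i j) ^ 2)

/-- Nuclear norm: sum of singular values, i.e. the sum of the square roots of
the eigenvalues of `Xᴴ * X`. -/
noncomputable def nuclearNorm {m n : Type*} [Fintype m] [Fintype n] [DecidableEq n]
    (X : Matrix m n ℝ) : ℝ :=
  ∑ i, Real.sqrt ((Matrix.isHermitian_conjTranspose_mul_self X).eigenvalues i)

section

variable {m n ι : Type*} [Fintype m] [Fintype n] [Fintype ι] [DecidableEq ι]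

theorem trace_mul_le_frobNorm_mul_frobNorm (P : Matrix m n ℝ) (Q : Matrix n m ℝ) :
    trace (P * Q) ≤ frobNorm P * frobNorm Q := by
  have hQ : ∑ x : m × n, Q x.2 x.1 ^ 2 = ∑ j, ∑ i, Q j i ^ 2 := by
    rw [Fintype.sum_prod_type, Finset.sum_comm]
  calc trace (P * Q) = ∑ x : m × n, P x.1 x.2 * Q x.2 x.1 := by
        simp only [trace, diag, mul_apply, Fintype.sum_prod_type]
    _ ≤ √(∑ x : m × n, P x.1 x.2 ^ 2) * √(∑ x : m × n, Q x.2 x.1 ^ 2) :=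
        Real.sum_mul_le_sqrt_mul_sqrt _ _ _
    _ = frobNorm P * frobNorm Q := by rw [hQ, Fintype.sum_prod_type]; rfl

theorem transpose_mul_mul_mul_eq_of_orthonormal {U : Matrix m ι ℝ} {V : Matrix n ι ℝ}
    (hU : Uᵀ * U = 1) (hV : Vᵀ * V = 1) (M : Matrix ι ι ℝ) :
    Uᵀ * (U * M * Vᵀ) * V = M := by
  rw [← Matrix.mul_assoc, ← Matrix.mul_assoc, hU, Matrix.one_mul, Matrix.mul_assoc, hV,
    Matrix.mul_one]

open scoped MatrixOrder

variable [DecidableEq n]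

theorem nuclearNorm_eq_trace_sqrt (X : Matrix m n ℝ) :
    nuclearNorm X = trace (CFC.sqrt (Xᴴ * X)) := by
  have hPS := posSemidef_conjTranspose_mul_self X
  rw [CFC.sqrt_eq_cfc, cfc_nnreal_eq_real _ (Xᴴ * X), hPS.1.cfc_eq, IsHermitian.cfc,
    Unitary.conjStarAlgAut_apply, trace_mul_comm, ← Matrix.mul_assoc,
    Unitary.coe_star_mul_self, Matrix.one_mul, trace_diagonal]
  refine Finset.sum_congr rfl fun i _ => ?_
  simp only [Function.comp_apply, Real.coe_sqrt, Real.coe_toNNReal', RCLike.ofReal_real_eq_id,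
    id, max_eq_left (hPS.eigenvalues_nonneg i)]

theorem sqrt_conjTranspose_mul_self_eq_of_svd {U : Matrix m ι ℝ} {V : Matrix n ι ℝ}
    {d : ι → ℝ} (hU : Uᵀ * U = 1) (hV : Vᵀ * V = 1) (hd : 0 ≤ d) :
    CFC.sqrt ((U * diagonal d * Vᵀ)ᴴ * (U * diagonal d * Vᵀ)) = V * diagonal d * Vᵀ := by
  have hX := posSemidef_conjTranspose_mul_self (U * diagonal d * Vᵀ)
  have hS : (V * diagonal d * Vᵀ).PosSemidef := by
    simpa [conjTranspose_eq_transpose_of_trivial] using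
      (posSemidef_diagonal_iff.mpr hd).mul_mul_conjTranspose_same V
  rw [CFC.sqrt_eq_iff _ _ hX.nonneg hS.nonneg, conjTranspose_eq_transpose_of_trivial]
  simp only [transpose_mul, diagonal_transpose, transpose_transpose, Matrix.mul_assoc]
  rw [← Matrix.mul_assoc Vᵀ, ← Matrix.mul_assoc Uᵀ, hU, hV]

theorem nuclearNorm_eq_sum_of_svd {U : Matrix m ι ℝ} {V : Matrix n ι ℝ}
    {d : ι → ℝ} (hU : Uᵀ * U = 1) (hV : Vᵀ * V = 1) (hd : 0 ≤ d) :
    nuclearNorm (U * diagonal d * Vᵀ) = ∑ i, d i := by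
  rw [nuclearNorm_eq_trace_sqrt, sqrt_conjTranspose_mul_self_eq_of_svd hU hV hd, trace_mul_comm,
    ← Matrix.mul_assoc, hV, Matrix.one_mul, trace_diagonal]

end

/-- for an SVD `X = U D Vᵀ` and any factorization `X = A B`,
`tr(D) = tr(Uᵀ A B V)`, and consequently `‖X‖_* ≤ ‖Uᵀ A‖_F ‖B V‖_F`. -/
theorem trace_eq_and_nuclearNorm_le (n p r k : ℕ)
    (X : Matrix (Fin n) (Fin p) ℝ) (U : Matrix (Fin n) (Fin r) ℝ)
    (V : Matrix (Fin p) (Fin r) ℝ) (d : Fin r → ℝ)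
    (A : Matrix (Fin n) (Fin k) ℝ) (B : Matrix (Fin k) (Fin p) ℝ)
    (hU : Uᵀ * U = 1) (hV : Vᵀ * V = 1) (hd : ∀ i, 0 < d i)
    (hSVD : X = U * Matrix.diagonal d * Vᵀ) (hfact : X = A * B) :
    Matrix.trace (Matrix.diagonal d) = Matrix.trace (Uᵀ * A * B * V) ∧
      nuclearNorm X ≤ frobNorm (Uᵀ * A) * frobNorm (B * V) := by
  have hcompress : Uᵀ * A * B * V = diagonal d := by
    rw [Matrix.mul_assoc Uᵀ, ← hfact, hSVD, transpose_mul_mul_mul_eq_of_orthonormal hU hV]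
  refine ⟨by rw [hcompress], ?_⟩
  calc nuclearNorm X = trace (diagonal d) := by
        rw [hSVD, nuclearNorm_eq_sum_of_svd hU hV fun i => (hd i).le, trace_diagonal]
    _ = trace ((Uᵀ * A) * (B * V)) := by rw [← Matrix.mul_assoc, hcompress]
    _ ≤ frobNorm (Uᵀ * A) * frobNorm (B * V) := trace_mul_le_frobNorm_mul_frobNorm _ _
end

section
/- Under the GAS model with identifiability conditions, if U1 = 0, U2 = 0, V1ᵀV1 = c·I and V2ᵀV2 = (1−c)·I for some constant 0 < c < 1, then the association coefficient ρ(X1, X2) = 1. -/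
/-!
Put `G = Uᵀ U`. Because `V₁ᵀ V₁ = a • 1` and `V₂ᵀ V₂ = b • 1` are scalar, the cross product
`X = Θ₁ᵀ Θ₂ = V₁ G V₂ᵀ` satisfies `Xᵀ X = N * N` for the positive semidefinite matrix
`N = √(a / b) • V₂ G V₂ᵀ`. The eigenvalues of `N * N` are the squares of those of `N`, so the
nuclear norm of `X` is `tr N = √(a b) tr G`, while `‖Θ₁‖_F² = a tr G` and `‖Θ₂‖_F² = b tr G`.
-/

open Matrix BigOperators

namespace Matrix

variable {m n p r : Type*} [Fintype m] [Fintype n] [Fintype p] [Fintype r]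

theorem IsHermitian.eigenvalues_multiset_eq_of_eq_mul_self [DecidableEq n]
    {M N : Matrix n n ℝ} (hM : M.IsHermitian) (hN : N.IsHermitian) (h : M = N * N) :
    Finset.univ.val.map hM.eigenvalues = Finset.univ.val.map fun i ↦ hN.eigenvalues i ^ 2 := by
  have hcfc : M = cfc (· ^ 2 : ℝ → ℝ) N := by rw [cfc_pow_id N 2 hN.isSelfAdjoint, h, sq]
  have hpoly : M.charpoly = _ := hcfc ▸ hN.charpoly_cfc_eq (· ^ 2)
  have hroots := hM.roots_charpoly_eq_eigenvalues
  rw [hpoly, Polynomial.roots_prod _ _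
    (Finset.prod_ne_zero_iff.mpr fun i _ ↦ Polynomial.X_sub_C_ne_zero _)] at hroots
  simpa [-map_pow, Multiset.bind_singleton] using hroots.symm

theorem IsHermitian.sum_sqrt_eigenvalues_eq_sum_abs [DecidableEq n]
    {M N : Matrix n n ℝ} (hM : M.IsHermitian) (hN : N.IsHermitian) (h : M = N * N) :
    ∑ i, √(hM.eigenvalues i) = ∑ i, |hN.eigenvalues i| := by
  simp only [Finset.sum_eq_multiset_sum, ← Real.sqrt_sq_eq_abs]
  rw [show (fun i ↦ √(hM.eigenvalues i)) = Real.sqrt ∘ hM.eigenvalues from rfl,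
    ← Multiset.map_map, hM.eigenvalues_multiset_eq_of_eq_mul_self hN h,
    Multiset.map_map]
  rfl

theorem trace_transpose_mul_self_pos {X : Matrix m n ℝ} (hX : X ≠ 0) : 0 < (Xᵀ * X).trace := by
  rw [← conjTranspose_eq_transpose_of_trivial]
  exact (posSemidef_conjTranspose_mul_self X).trace_nonneg.lt_of_ne'
    (trace_conjTranspose_mul_self_eq_zero_iff.not.mpr hX)

variable [DecidableEq r] {a : ℝ} {V : Matrix p r ℝ}

theorem transpose_mul_mul_of_transpose_mul_self_eq {t : Type*} (hV : Vᵀ * V = a • 1)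
    (B : Matrix r t ℝ) : Vᵀ * (V * B) = a • B := by
  rw [← Matrix.mul_assoc, hV, smul_mul, Matrix.one_mul]

theorem trace_mul_mul_transpose_of_transpose_mul_self_eq (hV : Vᵀ * V = a • 1)
    (G : Matrix r r ℝ) : (V * G * Vᵀ).trace = a * G.trace := by
  rw [trace_mul_cycle, hV, smul_mul, one_mul, trace_smul, smul_eq_mul]

end Matrix

section

variable {m n p q r : Type*} [Fintype m] [Fintype n] [Fintype p] [Fintype q] [Fintype r]

theorem frobNorm_eq_sqrt_trace (X : Matrix m n ℝ) : frobNorm X = √(Xᵀ * X).trace := by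
  rw [frobNorm, Finset.sum_comm]
  simp only [trace, diag, mul_apply, transpose_apply, sq]

theorem nuclearNorm_eq_trace_of_transpose_mul_self_eq [DecidableEq n] {X : Matrix m n ℝ}
    {N : Matrix n n ℝ} (hN : N.PosSemidef) (h : Xᵀ * X = N * N) : nuclearNorm X = N.trace := by
  rw [nuclearNorm, (isHermitian_conjTranspose_mul_self X).sum_sqrt_eigenvalues_eq_sum_abs
    hN.isHermitian (by rwa [conjTranspose_eq_transpose_of_trivial]),
    hN.isHermitian.trace_eq_sum_eigenvalues]
  exact Finset.sum_congr rfl fun i _ ↦ abs_of_nonneg (hN.eigenvalues_nonneg i)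

variable [DecidableEq r] {a b : ℝ} {V : Matrix p r ℝ} {W : Matrix q r ℝ}

theorem frobNorm_mul_transpose_of_transpose_mul_self_eq (hV : Vᵀ * V = a • 1)
    (U : Matrix m r ℝ) : frobNorm (U * Vᵀ) = √(a * (Uᵀ * U).trace) := by
  rw [frobNorm_eq_sqrt_trace, transpose_mul, transpose_transpose, Matrix.mul_assoc,
    ← Matrix.mul_assoc Uᵀ, ← Matrix.mul_assoc, trace_mul_mul_transpose_of_transpose_mul_self_eq hV]

theorem nuclearNorm_mul_transpose_of_transpose_mul_self_eq [DecidableEq q] (ha : 0 ≤ a)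
    (hb : 0 < b) (hV : Vᵀ * V = a • 1) (hW : Wᵀ * W = b • 1) (U : Matrix m r ℝ) :
    nuclearNorm ((U * Vᵀ)ᵀ * (U * Wᵀ)) = √(a * b) * (Uᵀ * U).trace := by
  set G := Uᵀ * U
  have hG : G.PosSemidef := by
    simpa only [conjTranspose_eq_transpose_of_trivial] using posSemidef_conjTranspose_mul_self U
  set N := √(a / b) • (W * G * Wᵀ)
  have hN : N.PosSemidef := by
    simpa only [N, conjTranspose_eq_transpose_of_trivial] using
      (hG.mul_mul_conjTranspose_same W).smul (Real.sqrt_nonneg (a / b))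
  have hsq : ((U * Vᵀ)ᵀ * (U * Wᵀ))ᵀ * ((U * Vᵀ)ᵀ * (U * Wᵀ)) = N * N := by
    have hX : (U * Vᵀ)ᵀ * (U * Wᵀ) = V * G * Wᵀ := by
      simp only [G, transpose_mul, transpose_transpose, Matrix.mul_assoc]
    have hGt : Gᵀ = G := by simp [G]
    rw [hX]
    simp only [N, transpose_mul, transpose_transpose, hGt, Matrix.mul_assoc, Matrix.smul_mul,
      Matrix.mul_smul, transpose_mul_mul_of_transpose_mul_self_eq hV,
      transpose_mul_mul_of_transpose_mul_self_eq hW, smul_smul]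
    congr 1
    rw [← mul_assoc, Real.mul_self_sqrt (div_nonneg ha hb.le), div_mul_cancel₀ a hb.ne']
  rw [nuclearNorm_eq_trace_of_transpose_mul_self_eq hN hsq, trace_smul,
    trace_mul_mul_transpose_of_transpose_mul_self_eq hW, smul_eq_mul]
  have hscale : √(a / b) * b = √(a * b) := calc
    √(a / b) * b = √(a / b) * √(b ^ 2) := by rw [Real.sqrt_sq hb.le]
    _ = √(a * b) := by rw [← Real.sqrt_mul (div_nonneg ha hb.le)]; field_simp
  rw [← mul_assoc, hscale]

theorem nuclearNorm_div_frobNorm_mul_frobNorm_eq_one [DecidableEq q] {U : Matrix m r ℝ}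
    (hU : U ≠ 0) (ha : 0 < a) (hb : 0 < b) (hV : Vᵀ * V = a • 1) (hW : Wᵀ * W = b • 1) :
    nuclearNorm ((U * Vᵀ)ᵀ * (U * Wᵀ)) / (frobNorm (U * Vᵀ) * frobNorm (U * Wᵀ)) = 1 := by
  set T := (Uᵀ * U).trace
  have hT : 0 < T := trace_transpose_mul_self_pos hU
  have hfrob : √(a * T) * √(b * T) = √(a * b) * T := by
    rw [← Real.sqrt_mul (by positivity), show a * T * (b * T) = a * b * T ^ 2 by ring,
      Real.sqrt_mul (by positivity), Real.sqrt_sq hT.le]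
  rw [nuclearNorm_mul_transpose_of_transpose_mul_self_eq ha.le hb hV hW,
    frobNorm_mul_transpose_of_transpose_mul_self_eq hV,
    frobNorm_mul_transpose_of_transpose_mul_self_eq hW, hfrob]
  exact div_self (by positivity)

end

theorem assoc_coeff_eq_one_gas_general (n p1 p2 r0 : ℕ)
    (U0 : Matrix (Fin n) (Fin r0) ℝ)
    (V1 : Matrix (Fin p1) (Fin r0) ℝ) (V2 : Matrix (Fin p2) (Fin r0) ℝ)
    (c : ℝ)
    (hU0 : U0 ≠ 0)
    (hc0 : 0 < c) (hc1 : c < 1)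
    (hV1 : V1ᵀ * V1 = c • (1 : Matrix (Fin r0) (Fin r0) ℝ))
    (hV2 : V2ᵀ * V2 = (1 - c) • (1 : Matrix (Fin r0) (Fin r0) ℝ)) :
    nuclearNorm ((U0 * V1ᵀ)ᵀ * (U0 * V2ᵀ)) /
        (frobNorm (U0 * V1ᵀ) * frobNorm (U0 * V2ᵀ)) = 1 :=
  nuclearNorm_div_frobNorm_mul_frobNorm_eq_one hU0 hc0 (sub_pos.mpr hc1) hV1 hV2

/-- with no individual structure and balanced joint loadings,
the association coefficient equals one. -/
theorem assoc_coeff_eq_one_gas (n p1 p2 r0 : ℕ)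
    (U0 : Matrix (Fin n) (Fin r0) ℝ)
    (V1 : Matrix (Fin p1) (Fin r0) ℝ) (V2 : Matrix (Fin p2) (Fin r0) ℝ)
    (d : Fin r0 → ℝ) (c : ℝ)
    (hU0 : U0 ≠ 0) (hU0diag : U0ᵀ * U0 = Matrix.diagonal d) (hd : ∀ i, 0 < d i)
    (hc0 : 0 < c) (hc1 : c < 1)
    (hV1 : V1ᵀ * V1 = c • (1 : Matrix (Fin r0) (Fin r0) ℝ))
    (hV2 : V2ᵀ * V2 = (1 - c) • (1 : Matrix (Fin r0) (Fin r0) ℝ)) :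
    nuclearNorm ((U0 * V1ᵀ)ᵀ * (U0 * V2ᵀ)) /
        (frobNorm (U0 * V1ᵀ) * frobNorm (U0 * V2ᵀ)) = 1 :=
  assoc_coeff_eq_one_gas_general n p1 p2 r0 U0 V1 V2 c hU0 hc0 hc1 hV1 hV2
end
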